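/- Define Q_n in Z[q] by the recurrence q^{n(n+1)/2} = sum_{r=0}^n C(n, n-r)_q Q_r (with Gaussian binomial coefficients). Then Q_{2r+1} = prod_{i=0}^{r} (q^{2r+1} - q^{2i}) and Q_{2r} = prod_{i=1}^{r} (q^{2r+1} - q^{2i}). -/

import Mathlib

open Finset

/-- The Gaussian binomial coefficient `C(n, m)_q` as a polynomial in `ℤ[q]`, defined by
the q-Pascal recurrence `C(n+1, m+1)_q = C(n, m)_q + q^(m+1) C(n, m+1)_q`. -/
noncomputable def gbinomPoly : ℕ → ℕ → Polynomial ℤ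
  | _, 0 => 1
  | 0, _ + 1 => 0
  | n + 1, m + 1 => gbinomPoly n m + Polynomial.X ^ (m + 1) * gbinomPoly n (m + 1)

/-!
The solution is `Q_n = ∏_{j=1}^n (q^j - [j odd])`; over `𝔽_q` this counts the nonsingular
symmetric `n × n` matrices, and the recurrence sorts all `q^(n(n+1)/2)` symmetric matrices by
rank. Since `C(n, 0)_q = 1`, the recurrence determines `Q` uniquely, so it suffices to check it
for this product.

Write `B_n[f](x) = ∑_{i+j=n} C(n,i)_q x^i f(j)`. The two q-Pascal rules express `B_{n+1}[f]`
through `B_n[f]` and `B_n[f(· + 1)]`, and `Q_{m+1} = q^{m+1} Q_m - [m even] Q_m`, with the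
same shape for the even and odd parts of `Q`. Hence `B_n[Q](1)`, `B_n[Q_even](q)`,
`B_n[Q_odd](q)` and `B_n[Q_even](q^2)` satisfy a closed recursion in `n`, whose solution consists
of explicit powers of `q`.
-/

open Polynomial Finset.Nat

lemma gbinomPoly_zero_right (n : ℕ) : gbinomPoly n 0 = 1 := by
  cases n <;> rfl

lemma gbinomPoly_succ_succ (n k : ℕ) :
    gbinomPoly (n + 1) (k + 1) = gbinomPoly n k + X ^ (k + 1) * gbinomPoly n (k + 1) := rfl

lemma gbinomPoly_eq_zero_of_lt {n k : ℕ} (h : n < k) : gbinomPoly n k = 0 := by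
  induction n generalizing k with
  | zero => obtain ⟨k, rfl⟩ := Nat.exists_eq_add_of_lt h; rfl
  | succ n ih =>
    obtain ⟨k, rfl⟩ := Nat.exists_eq_add_of_lt (Nat.zero_lt_of_lt h)
    rw [gbinomPoly_succ_succ, ih (by omega), ih (by omega), mul_zero, add_zero]

lemma gbinomPoly_succ_succ' (n k : ℕ) :
    gbinomPoly (n + 1) (k + 1) = X ^ (n - k) * gbinomPoly n k + gbinomPoly n (k + 1) := by
  induction n generalizing k with
  | zero => cases k <;> simp [gbinomPoly_succ_succ, gbinomPoly_eq_zero_of_lt]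
  | succ n ih =>
    cases k with
    | zero =>
      have := ih 0
      simp only [gbinomPoly_succ_succ, gbinomPoly_zero_right, zero_add, pow_one, mul_one,
        Nat.sub_zero] at this ⊢
      linear_combination X * this
    | succ k =>
      have hX : X ^ (k + 2) * X ^ (n - (k + 1)) * gbinomPoly n (k + 1)
          = X ^ (n - k) * X ^ (k + 1) * gbinomPoly n (k + 1) := by
        rcases lt_or_ge k n with hk | hk
        · rw [← pow_add, ← pow_add]; congr 2; omega
        · rw [gbinomPoly_eq_zero_of_lt (by omega : n < k + 1), mul_zero, mul_zero]
      rw [gbinomPoly_succ_succ (n + 1), Nat.add_sub_add_right]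
      linear_combination (ih k) + X ^ (k + 2) * (ih (k + 1))
        - X ^ (n - k) * gbinomPoly_succ_succ n k - gbinomPoly_succ_succ n (k + 1) + hX

noncomputable def gbinomTransform (f : ℕ → ℤ[X]) (n : ℕ) (x : ℤ[X]) : ℤ[X] :=
  ∑ p ∈ antidiagonal n, gbinomPoly n p.1 * x ^ p.1 * f p.2

lemma gbinomTransform_comp_succ (f : ℕ → ℤ[X]) (n : ℕ) (x : ℤ[X]) :
    gbinomTransform (fun m ↦ f (m + 1)) n x
      = f (n + 1) + ∑ p ∈ antidiagonal n, gbinomPoly n (p.1 + 1) * x ^ (p.1 + 1) * f p.2 := by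
  have h := (sum_antidiagonal_succ' (n := n)
    (f := fun p ↦ gbinomPoly n p.1 * x ^ p.1 * f p.2)).symm.trans (sum_antidiagonal_succ (n := n))
  simpa [gbinomTransform, gbinomPoly_eq_zero_of_lt, gbinomPoly_zero_right] using h

lemma gbinomTransform_succ (f : ℕ → ℤ[X]) (n : ℕ) (x : ℤ[X]) :
    gbinomTransform f (n + 1) x
      = x * gbinomTransform f n x + gbinomTransform (fun m ↦ f (m + 1)) n (X * x) := by
  rw [gbinomTransform_comp_succ, gbinomTransform, sum_antidiagonal_succ, gbinomTransform,
    mul_sum]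
  simp only [gbinomPoly_zero_right, gbinomPoly_succ_succ, add_mul, sum_add_distrib]
  ring_nf

lemma gbinomTransform_succ' (f : ℕ → ℤ[X]) (n : ℕ) (x : ℤ[X]) :
    gbinomTransform f (n + 1) x
      = x * gbinomTransform (fun m ↦ X ^ m * f m) n x
        + gbinomTransform (fun m ↦ f (m + 1)) n x := by
  rw [gbinomTransform_comp_succ, gbinomTransform, sum_antidiagonal_succ, gbinomTransform,
    mul_sum]
  simp only [gbinomPoly_zero_right, gbinomPoly_succ_succ', add_mul, sum_add_distrib]
  have h : ∀ p ∈ antidiagonal n, X ^ (n - p.1) * gbinomPoly n p.1 * x ^ (p.1 + 1) * f p.2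
      = x * (gbinomPoly n p.1 * x ^ p.1 * (X ^ p.2 * f p.2)) := by
    intro p hp
    rw [← mem_antidiagonal.mp hp, Nat.add_sub_cancel_left]
    ring
  rw [sum_congr rfl h]
  ring

lemma gbinomTransform_X_pow_mul_sub (g h : ℕ → ℤ[X]) (n : ℕ) (x : ℤ[X]) :
    gbinomTransform (fun m ↦ X ^ (m + 1) * g m - h m) n (X * x)
      = X ^ (n + 1) * gbinomTransform g n x - gbinomTransform h n (X * x) := by
  simp only [gbinomTransform, mul_sum, ← sum_sub_distrib]
  refine sum_congr rfl fun p hp ↦ ?_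
  rw [← mem_antidiagonal.mp hp]
  ring

lemma gbinomTransform_X_pow_mul (g : ℕ → ℤ[X]) (n : ℕ) (x : ℤ[X]) :
    gbinomTransform (fun m ↦ X ^ m * g m) n (X * x) = X ^ n * gbinomTransform g n x := by
  simp only [gbinomTransform, mul_sum]
  refine sum_congr rfl fun p hp ↦ ?_
  rw [← mem_antidiagonal.mp hp]
  ring

section

variable {f g h : ℕ → ℤ[X]}

lemma gbinomTransform_succ_of_shift (hf : ∀ m, f (m + 1) = X ^ (m + 1) * g m - h m) (n : ℕ)
    (x : ℤ[X]) :
    gbinomTransform f (n + 1) x = x * gbinomTransform f n x + X ^ (n + 1) * gbinomTransform g n x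
      - gbinomTransform h n (X * x) := by
  rw [gbinomTransform_succ, funext hf, gbinomTransform_X_pow_mul_sub, add_sub_assoc]

lemma gbinomTransform_succ_X_mul_of_shift (hf : ∀ m, f (m + 1) = X ^ (m + 1) * g m - h m)
    (n : ℕ) (x : ℤ[X]) :
    gbinomTransform f (n + 1) (X * x) = X ^ (n + 1) * x * gbinomTransform f n x
      + X ^ (n + 1) * gbinomTransform g n x - gbinomTransform h n (X * x) := by
  rw [gbinomTransform_succ', funext hf, gbinomTransform_X_pow_mul_sub, gbinomTransform_X_pow_mul]
  ring

end

noncomputable def closedQ : ℕ → ℤ[X]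
  | 0 => 1
  | n + 1 => (X ^ (n + 1) - if Even n then 1 else 0) * closedQ n

noncomputable def closedQEven (m : ℕ) : ℤ[X] := if Even m then closedQ m else 0

noncomputable def closedQOdd (m : ℕ) : ℤ[X] := if Even m then 0 else closedQ m

lemma closedQ_succ (m : ℕ) : closedQ (m + 1) = X ^ (m + 1) * closedQ m - closedQEven m := by
  rw [closedQ, closedQEven]
  split_ifs <;> ring

-- The `- 0` gives this the shape `gbinomTransform_succ_of_shift` expects.
lemma closedQEven_succ (m : ℕ) : closedQEven (m + 1) = X ^ (m + 1) * closedQOdd m - 0 := by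
  simp only [closedQEven, closedQOdd, closedQ, Nat.even_add_one]
  split_ifs <;> ring

lemma closedQOdd_succ (m : ℕ) :
    closedQOdd (m + 1) = X ^ (m + 1) * closedQEven m - closedQEven m := by
  simp only [closedQEven, closedQOdd, closedQ, Nat.even_add_one]
  split_ifs <;> ring

lemma Nat.succ_choose_two (n : ℕ) : (n + 1).choose 2 = n.choose 2 + n := by
  rw [Nat.choose_succ_succ', Nat.choose_one_right, add_comm]

lemma gbinomTransform_closedQ_parity (n : ℕ) :
    gbinomTransform closedQEven n X = X ^ n.choose 2 * X ^ n ∧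
    gbinomTransform closedQOdd n X = X ^ n.choose 2 * (X ^ n - 1) ∧
    gbinomTransform closedQEven n (X * X) = X ^ n.choose 2 * (X ^ (n + 1) + X ^ n - X) := by
  induction n with
  | zero => simp [gbinomTransform, closedQEven, closedQOdd, closedQ, gbinomPoly_zero_right]
  | succ n ih =>
    obtain ⟨hc, hd, hg⟩ := ih
    have h0 : gbinomTransform (fun _ ↦ 0) n (X * X) = 0 := by simp [gbinomTransform]
    rw [Nat.succ_choose_two, pow_add]
    refine ⟨?_, ?_, ?_⟩
    · rw [gbinomTransform_succ_of_shift closedQEven_succ, hc, hd, h0]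
      ring
    · rw [gbinomTransform_succ_of_shift closedQOdd_succ, hc, hd, hg]
      ring
    · rw [gbinomTransform_succ_X_mul_of_shift closedQEven_succ, hc, hd, h0]
      ring

lemma gbinomTransform_closedQ_one (n : ℕ) :
    gbinomTransform closedQ n 1 = X ^ (n + 1).choose 2 := by
  induction n with
  | zero => simp [gbinomTransform, closedQ, gbinomPoly_zero_right]
  | succ n ih =>
    rw [gbinomTransform_succ_of_shift closedQ_succ, mul_one, ih,
      (gbinomTransform_closedQ_parity n).1, Nat.succ_choose_two (n + 1), Nat.succ_choose_two]
    ring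

lemma gbinomTransform_one_eq_sum_range (f : ℕ → ℤ[X]) (n : ℕ) :
    gbinomTransform f n 1 = ∑ r ∈ range (n + 1), gbinomPoly n (n - r) * f r := by
  rw [gbinomTransform, ← sum_antidiagonal_swap]
  simpa using sum_antidiagonal_eq_sum_range_succ (fun i j ↦ gbinomPoly n j * f i) n

lemma eq_of_sum_gbinomPoly_eq {F G : ℕ → ℤ[X]}
    (h : ∀ n, ∑ r ∈ range (n + 1), gbinomPoly n (n - r) * F r
      = ∑ r ∈ range (n + 1), gbinomPoly n (n - r) * G r) : F = G := by
  funext n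
  induction n using Nat.strong_induction_on with
  | _ n ih =>
    have hn := h n
    rw [sum_range_succ, sum_range_succ, sum_congr rfl fun r hr ↦ by rw [ih r (mem_range.mp hr)],
      Nat.sub_self, gbinomPoly_zero_right, one_mul, one_mul] at hn
    exact add_left_cancel hn

lemma closedQ_two_mul_eq_prod_range (r : ℕ) :
    closedQ (2 * r) = ∏ i ∈ range r, (X ^ (2 * r + 1) - X ^ (2 * (i + 1)) : ℤ[X]) := by
  induction r with
  | zero => rfl
  | succ r ih =>
    have hfactor : ∀ i ∈ range r, (X ^ (2 * (r + 1) + 1) - X ^ (2 * (i + 1 + 1)) : ℤ[X])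
        = X ^ 2 * (X ^ (2 * r + 1) - X ^ (2 * (i + 1))) := fun i _ ↦ by ring
    rw [prod_range_succ', prod_congr rfl hfactor, prod_mul_distrib, prod_const, card_range, ← ih,
      show 2 * (r + 1) = 2 * r + 1 + 1 by ring, closedQ, closedQ]
    simp only [Nat.even_add_one, even_two_mul, not_true_eq_false, if_false, if_true]
    ring

lemma closedQ_two_mul_add_one (r : ℕ) :
    closedQ (2 * r + 1) = ∏ i ∈ range (r + 1), (X ^ (2 * r + 1) - X ^ (2 * i) : ℤ[X]) := by
  rw [closedQ, closedQ_two_mul_eq_prod_range, prod_range_succ']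
  simp [mul_comm]

lemma closedQ_two_mul (r : ℕ) :
    closedQ (2 * r) = ∏ i ∈ Icc 1 r, (X ^ (2 * r + 1) - X ^ (2 * i) : ℤ[X]) := by
  rw [closedQ_two_mul_eq_prod_range, ← Ico_add_one_right_eq_Icc, prod_Ico_eq_prod_range]
  simp [add_comm]

/-- If `Q_n ∈ ℤ[q]` satisfies `q^(n(n+1)/2) = ∑_{r=0}^n C(n, n-r)_q Q_r`, then
`Q_{2r+1} = ∏_{i=0}^r (q^(2r+1) - q^(2i))` and `Q_{2r} = ∏_{i=1}^r (q^(2r+1) - q^(2i))`. -/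
theorem recurrence_solution (Qp : ℕ → Polynomial ℤ)
    (hrec : ∀ n, (Polynomial.X : Polynomial ℤ) ^ (n * (n + 1) / 2)
      = ∑ r ∈ range (n + 1), gbinomPoly n (n - r) * Qp r) :
    ∀ r : ℕ,
      Qp (2 * r + 1)
          = ∏ i ∈ range (r + 1),
              ((Polynomial.X : Polynomial ℤ) ^ (2 * r + 1) - Polynomial.X ^ (2 * i)) ∧
      Qp (2 * r)
          = ∏ i ∈ Icc 1 r,
              ((Polynomial.X : Polynomial ℤ) ^ (2 * r + 1) - Polynomial.X ^ (2 * i)) := by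
  have hQ : Qp = closedQ := eq_of_sum_gbinomPoly_eq fun n ↦ by
    rw [← hrec n, ← gbinomTransform_one_eq_sum_range, gbinomTransform_closedQ_one,
      Nat.choose_two_right, Nat.add_sub_cancel, mul_comm]
  subst hQ
  exact fun r ↦ ⟨closedQ_two_mul_add_one r, closedQ_two_mul r⟩
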